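/- The left-invariant metric g on the Heisenberg group satisfies the Sasakian curvature identity: for all vector fields U, V (expressed in the frame X, Y, T̃), R(U, T̃)V = g(U,V) T̃ - g(T̃,V) U. -/
import Mathlib


/-- Left-invariant vector fields on the Heisenberg group in coordinates with
respect to the orthonormal frame {X, Y, T̃}. -/
abbrev V3 : Type := ℝ × ℝ × ℝ

/-- The Reeb field T̃ = 2∂_t in frame coordinates. -/
def Tv : V3 := (0, 0, 1)

/-- The left-invariant metric making {X, Y, T̃} orthonormal. -/
def gdot (u v : V3) : ℝ := u.1 * v.1 + u.2.1 * v.2.1 + u.2.2 * v.2.2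

/-- Lie bracket: [X,Y] = -2T̃ is the only nonzero bracket. -/
def brk (u v : V3) : V3 := (0, 0, -2 * (u.1 * v.2.1 - u.2.1 * v.1))

/-- The Levi-Civita connection ∇_u v of g on left-invariant fields. -/
def nab (u v : V3) : V3 :=
  (-(u.2.1 * v.2.2 + u.2.2 * v.2.1), u.1 * v.2.2 + u.2.2 * v.1,
    -(u.1 * v.2.1) + u.2.1 * v.1)

/-- Curvature tensor R(U,V)W = ∇_V ∇_U W - ∇_U ∇_V W + ∇_{[U,V]} W. -/
def Rcurv (u v w : V3) : V3 := nab v (nab u w) - nab u (nab v w) + nab (brk u v) w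

/-- The Sasakian curvature identity R(U,T̃)V = g(U,V)T̃ - g(T̃,V)U. -/
theorem sasakian_curvature_identity :
    ∀ U V : V3, Rcurv U Tv V = gdot U V • Tv - gdot Tv V • U := by
  rintro ⟨a, b, c⟩ ⟨d, e, f⟩
  simp only [Rcurv, nab, brk, gdot, Tv, Prod.ext_iff, Prod.mk_sub_mk, Prod.mk_add_mk,
    Prod.smul_mk, smul_eq_mul]
  refine ⟨by ring, by ring, by ring⟩
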